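/- Assume that (H, G₁) satisfies Condition A with constant ζ and Condition B with constant ζ for some integer ζ ≥ 1. Then G₁P⁻¹G₁ ⊆ P⁻¹: for all α, γ ∈ G₁ and every (H, G₁)-negative β ∈ G, the element αβγ is (H, G₁)-negative. -/

import Mathlib

namespace GarsideOrder

variable {G : Type*} [Group G]

/-- `a ≤_R b` iff `b * a⁻¹ ∈ M`. -/
def leR (M : Submonoid G) (a b : G) : Prop := b * a⁻¹ ∈ M

/-- `a ≤_L b` iff `a⁻¹ * b ∈ M`. -/
def leL (M : Submonoid G) (a b : G) : Prop := a⁻¹ * b ∈ M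

/-- Right divisors (in `M`) of `a`. -/
def DivR (M : Submonoid G) (a : G) : Set G := {b : G | b ∈ M ∧ leR M b a}

/-- Left divisors (in `M`) of `a`. -/
def DivL (M : Submonoid G) (a : G) : Set G := {b : G | b ∈ M ∧ leL M b a}

/-- `a` is balanced if its sets of right and left divisors coincide. -/
def Balanced (M : Submonoid G) (a : G) : Prop := DivR M a = DivL M a

open Classical in
/-- The `N`-tail of `a`: the unique `b ∈ N` having the same right divisors lying in `N`
as `a` (w.r.t. the divisibility of the ambient monoid `M`). -/
noncomputable def tail (M N : Submonoid G) (a : G) : G :=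
  if h : ∃ b : G, b ∈ N ∧
      {c : G | c ∈ N ∧ leR M c a} = {c : G | c ∈ N ∧ leR M c b} then
    h.choose
  else 1

/-- Iterated stripping of alternating tails: first the `M₁`-tail, then the `N`-tail, etc. -/
noncomputable def strip (M M₁ N : Submonoid G) : ℕ → G → G
  | 0, a => a
  | i + 1, a =>
      strip M M₁ N i a *
        (tail M (if i % 2 = 0 then M₁ else N) (strip M M₁ N i a))⁻¹

/-- The breadth of `a`: the length of the alternating form of `a`, i.e. the least `p ≥ 1`
such that stripping alternating tails `p` times reaches `1`. -/
noncomputable def bh (M M₁ N : Submonoid G) (a : G) : ℕ :=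
  sInf {p : ℕ | 1 ≤ p ∧ strip M M₁ N p a = 1}

/-- The depth of `a`: `(bh a - 1)/2` if `bh a` is odd, `bh a / 2` if `bh a` is even;
in both cases this is `bh a / 2` with natural division. -/
noncomputable def dpt (M M₁ N : Submonoid G) (a : G) : ℕ := bh M M₁ N a / 2

/-- `a ∈ M` is unmovable if `Δ` does not right-divide it. -/
def Unmovable (M : Submonoid G) (Δ a : G) : Prop := a ∈ M ∧ ¬ leR M Δ a

/-- `α` is `(H, G₁)`-negative: its `Δ`-form is `a Δ^{-k}` with `k ≥ 1` and
`dpt a < dpt (Δ^k)`. -/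
def Negative (M M₁ N : Submonoid G) (Δ : G) (α : G) : Prop :=
  ∃ a : G, ∃ k : ℕ, Unmovable M Δ a ∧ 1 ≤ k ∧ α = a * (Δ ^ k)⁻¹ ∧
    dpt M M₁ N a < dpt M M₁ N (Δ ^ k)

/-- `α` is `(H, G₁)`-positive if `α⁻¹` is `(H, G₁)`-negative. -/
def Positive (M M₁ N : Submonoid G) (Δ : G) (α : G) : Prop :=
  Negative M M₁ N Δ α⁻¹

/-- The set `Θ` of theta elements `θ^k a₀`, `k ≥ 1`, `a₀ ∈ M₁`. -/
def thetaSet (M₁ : Submonoid G) (θ : G) : Set G :=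
  {x : G | ∃ k : ℕ, 1 ≤ k ∧ ∃ a₀ ∈ M₁, x = θ ^ k * a₀}

/-- `Θ̄ = Θ ∪ M₁`. -/
def thetaBar (M₁ : Submonoid G) (θ : G) : Set G := thetaSet M₁ θ ∪ (M₁ : Set G)

/-- Condition A with constant `ζ`: `dpt (Δ^k) = ζ k + 1` for all `k ≥ 1`. -/
def CondA (M M₁ N : Submonoid G) (Δ : G) (ζ : ℕ) : Prop :=
  ∀ k : ℕ, 1 ≤ k → dpt M M₁ N (Δ ^ k) = ζ * k + 1

/-- Condition B with constant `ζ`. -/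
def CondB (M M₁ N : Submonoid G) (Δ θ : G) (ζ : ℕ) : Prop :=
  ∀ a b c : G, ∀ t : ℤ,
    Unmovable M Δ a → Unmovable M Δ b →
    ¬(a ∈ thetaBar M₁ θ ∧ b ∈ thetaBar M₁ θ) →
    Unmovable M Δ c → a * b = c * Δ ^ t →
    ∃ ε : ℕ, ε ≤ 1 ∧
      (dpt M M₁ N c : ℤ) =
        (dpt M M₁ N a : ℤ) + (dpt M M₁ N b : ℤ) - (ζ : ℤ) * t - (ε : ℤ) ∧
      ((a ∈ thetaSet M₁ θ ∨ b ∈ thetaSet M₁ θ ∨ c ∈ M₁) → ε = 1)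

/-- A Garside structure with group of fractions the subgroup `car`. -/
structure IsGarsideOn (car : Subgroup G) (M : Submonoid G) (Δ : G) : Prop where
  M_sub : (M : Set G) ⊆ (car : Set G)
  delta_mem : Δ ∈ M
  units_trivial : ∀ x : G, x ∈ M → x⁻¹ ∈ M → x = 1
  noetherian : ∀ a ∈ M, ∃ n : ℕ, 1 ≤ n ∧ ∀ l : List G,
      (∀ x ∈ l, x ∈ M ∧ x ≠ 1) → l.prod = a → l.length ≤ n
  balanced : Balanced M Δ
  div_finite : (DivR M Δ).Finite
  div_gen_monoid : Submonoid.closure (DivR M Δ) = M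
  div_gen_group : Subgroup.closure (DivR M Δ) = car
  meet : ∀ a ∈ car, ∀ b ∈ car, ∃ c ∈ car, leR M c a ∧ leR M c b ∧
      ∀ d ∈ car, leR M d a → leR M d b → leR M d c
  join : ∀ a ∈ car, ∀ b ∈ car, ∃ c ∈ car, leR M a c ∧ leR M b c ∧
      ∀ d ∈ car, leR M a d → leR M b d → leR M c d

/-- The parabolic submonoid determined by `δ`: the submonoid generated by `Div(δ)`. -/
def parM (M : Submonoid G) (δ : G) : Submonoid G := Submonoid.closure (DivR M δ)

/-- The parabolic subgroup determined by `δ`: the subgroup generated by `Div(δ)`. -/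
def parG (M : Submonoid G) (δ : G) : Subgroup G := Subgroup.closure (DivR M δ)

/-- `δ` determines a parabolic substructure of `(G, M, Δ)`. -/
structure IsParabolic (M : Submonoid G) (Δ δ : G) : Prop where
  mem : δ ∈ M
  balanced : Balanced M δ
  div_eq : DivR M δ = DivR M Δ ∩ (parM M δ : Set G)

/-- The setting of Section 3: a Garside structure `(car, M, Δ)` together with two
parabolic substructures `(H, N, Λ)` (given by `lam`) and `(G₁, M₁, Δ₁)` (given by `δ1`),
with `N ≠ M`, `M₁ ≠ M`, `N ∪ M₁` generating `M`, `Δ` central, `Δ₁` central in `G₁`. -/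
structure Setting (G : Type*) [Group G] where
  car : Subgroup G
  M : Submonoid G
  Δ : G
  δ1 : G
  lam : G
  garside : IsGarsideOn car M Δ
  par1 : IsParabolic M Δ δ1
  parH : IsParabolic M Δ lam
  N_ne : parM M lam ≠ M
  M1_ne : parM M δ1 ≠ M
  unionGen : Submonoid.closure ((parM M lam : Set G) ∪ (parM M δ1 : Set G)) = M
  delta_central : ∀ g ∈ car, Δ * g = g * Δ
  delta1_central : ∀ g ∈ parG M δ1, δ1 * g = g * δ1

namespace Setting

variable (S : Setting G)

/-- The parabolic submonoid `M₁`. -/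
def M₁ : Submonoid G := parM S.M S.δ1

/-- The parabolic submonoid `N`. -/
def Nsub : Submonoid G := parM S.M S.lam

/-- The parabolic subgroup `G₁`. -/
def G₁ : Subgroup G := parG S.M S.δ1

/-- `θ = Δ Δ₁⁻¹`. -/
def theta : G := S.Δ * S.δ1⁻¹

/-- The set of `(H, G₁)`-negative elements. -/
def Neg : Set G := {α : G | Negative S.M S.M₁ S.Nsub S.Δ α}

/-- The set of `(H, G₁)`-positive elements. -/
def Pos : Set G := {α : G | α⁻¹ ∈ S.Neg}

/-- Condition A. -/
def condA (ζ : ℕ) : Prop := CondA S.M S.M₁ S.Nsub S.Δ ζ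

/-- Condition B. -/
def condB (ζ : ℕ) : Prop := CondB S.M S.M₁ S.Nsub S.Δ S.theta ζ

/-- `(H, G₁)` is a Dehornoy structure: `PP ⊆ P`, `G₁ P G₁ ⊆ P`, and the group is the
disjoint union of `P`, `P⁻¹` and `G₁`. -/
def IsDehornoy : Prop :=
  (∀ α ∈ S.Pos, ∀ β ∈ S.Pos, α * β ∈ S.Pos) ∧
  (∀ g₁ ∈ S.G₁, ∀ α ∈ S.Pos, ∀ g₂ ∈ S.G₁, g₁ * α * g₂ ∈ S.Pos) ∧
  (∀ α ∈ S.car, α ∈ S.Pos ∨ α ∈ S.Neg ∨ α ∈ S.G₁) ∧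
  (∀ α : G, ¬(α ∈ S.Pos ∧ α ∈ S.Neg)) ∧
  (∀ α : G, ¬(α ∈ S.Pos ∧ α ∈ S.G₁)) ∧
  (∀ α : G, ¬(α ∈ S.Neg ∧ α ∈ S.G₁))

end Setting

end GarsideOrder

/-!
Every `h ∈ G₁` can be written `h = (θ^p w) Δ^{-p}` with `w ∈ M₁` and `θ^p w` unmovable, and
`dpt (θ^p w) = dpt (Δ^p)`, because removing the `M₁`-tails of `θ^p w` and of `Δ^p = θ^p Δ₁^p`
leaves `θ^p` in both cases. Write `β = b Δ^{-k}`.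

If `b = θ^j b₀ ∈ Θ̄`, then `dpt b < dpt (Δ^k)` forces `j < k`, and `αβγ = h Δ^{-(k-j)}` with
`h = α Δ₁^{-j} b₀ γ ∈ G₁`, so `αβγ = (θ^p w) Δ^{-(p+k-j)}` is negative.

Otherwise write `α = A Δ^{-m}`, `γ = C Δ^{-n}` as above and take the Δ-forms `A b = c₁ Δ^{t₁}`,
`c₁ C = c₂ Δ^{t₂}`. An unmovable element of the subgroup generated by `Δ` and `G₁` lies in `Θ̄`,
so neither `c₁` nor `c₂` lies in `Θ̄` and Condition B applies to both products; together with
Condition A this gives `dpt c₂ ≤ ζ (m + k + n - t₁ - t₂)`. The exponent `m + k + n - t₁ - t₂` is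
positive, since otherwise `dpt c₂ = 0`, which (the alternating form being finite) puts `c₂` in
`M₁`; hence `αβγ = c₂ Δ^{-(m+k+n-t₁-t₂)}` is negative.
-/

namespace GarsideOrder

variable {G : Type*} [Group G]

/-! ### Divisibility, factor length and Δ-forms -/

section Divisibility

variable {M : Submonoid G} {a b c : G}

theorem leR_refl (a : G) : leR M a a := by simp [leR]

theorem leR_trans (hab : leR M a b) (hbc : leR M b c) : leR M a c := by
  simpa [leR, mul_assoc] using M.mul_mem hbc hab

theorem leR_mul_right_iff (x : G) : leR M (a * x) (b * x) ↔ leR M a b := by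
  simp [leR, mul_assoc]

theorem leR_mul_right (x : G) (h : leR M a b) : leR M (a * x) (b * x) :=
  (leR_mul_right_iff x).2 h

theorem one_leR_iff : leR M 1 a ↔ a ∈ M := by simp [leR]

theorem leR_mul_left (ha : a ∈ M) (b : G) : leR M b (a * b) := by simpa [leR] using ha

theorem mem_of_leR (ha : a ∈ M) (h : leR M a b) : b ∈ M := by simpa using M.mul_mem h ha

variable (hM : ∀ x : G, x ∈ M → x⁻¹ ∈ M → x = 1)
include hM

theorem leR_antisymm (hab : leR M a b) (hba : leR M b a) : a = b :=
  mul_inv_eq_one.1 (hM _ hba (by simpa [leR] using hab))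

theorem eq_one_of_leR_one (ha : a ∈ M) (h : leR M a 1) : a = 1 :=
  hM a ha (by simpa [leR] using h)

end Divisibility

theorem exists_mem_leR_of_closure_eq {M : Submonoid G} {s : Set G} (hs : Submonoid.closure s = M)
    {a : G} (ha : a ∈ M) (ha1 : a ≠ 1) : ∃ d ∈ s, d ≠ 1 ∧ leR M d a := by
  rw [← hs] at ha
  induction ha using Submonoid.closure_induction_right with
  | one => exact absurd rfl ha1
  | mul_right x hx d hd ih =>
    by_cases hd1 : d = 1
    · subst hd1
      simpa using ih (by simpa using ha1)
    · exact ⟨d, hd, hd1, leR_mul_left (hs ▸ hx) d⟩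

theorem zpow_mem_of_nonneg {M : Submonoid G} {x : G} (hx : x ∈ M) {t : ℤ} (ht : 0 ≤ t) :
    x ^ t ∈ M := by
  lift t to ℕ using ht
  simpa using pow_mem hx t

noncomputable def factorLength (M : Submonoid G) (a : G) : ℕ :=
  sInf {n | ∀ l : List G, (∀ x ∈ l, x ∈ M ∧ x ≠ 1) → l.prod = a → l.length ≤ n}

namespace IsGarsideOn

section FactorLength

variable {car : Subgroup G} {M : Submonoid G} {Δ a c y : G} (g : IsGarsideOn car M Δ)
include g

theorem length_le_factorLength (ha : a ∈ M) (l : List G) (hl : ∀ x ∈ l, x ∈ M ∧ x ≠ 1)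
    (hprod : l.prod = a) : l.length ≤ factorLength M a := by
  obtain ⟨n, -, hn⟩ := g.noetherian a ha
  exact Nat.sInf_mem (s := {n | ∀ l : List G, (∀ x ∈ l, x ∈ M ∧ x ≠ 1) → l.prod = a →
    l.length ≤ n}) ⟨n, hn⟩ l hl hprod

theorem factorLength_lt_mul (hy : y ∈ M) (hc : c ∈ M) (hc1 : c ≠ 1) :
    factorLength M y < factorLength M (y * c) := by
  have hyc : y * c ∈ M := M.mul_mem hy hc
  have hyc1 : y * c ≠ 1 := fun h =>
    hc1 (g.units_trivial c hc (by rwa [← eq_inv_of_mul_eq_one_left h]))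
  have hpos : 1 ≤ factorLength M (y * c) := by
    simpa using g.length_le_factorLength hyc [y * c] (by simp [hyc, hyc1]) (by simp)
  have hle : factorLength M y ≤ factorLength M (y * c) - 1 := by
    refine Nat.sInf_le fun l hl hprod => ?_
    have := g.length_le_factorLength hyc (l ++ [c])
      (by simpa [or_imp, forall_and, hc, hc1] using hl) (by simp [hprod])
    simp only [List.length_append, List.length_singleton] at this
    omega
  omega

theorem factorLength_mul_inv_lt (hc : c ∈ M) (hc1 : c ≠ 1) (h : leR M c a) :
    factorLength M (a * c⁻¹) < factorLength M a := by
  simpa using g.factorLength_lt_mul h hc hc1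

theorem exists_simple_leR (ha : a ∈ M) (ha1 : a ≠ 1) : ∃ s ∈ DivR M Δ, s ≠ 1 ∧ leR M s a :=
  exists_mem_leR_of_closure_eq g.div_gen_monoid ha ha1

theorem exists_unmovable_mul_pow (hΔ : Δ ≠ 1) (ha : a ∈ M) :
    ∃ c : G, ∃ s : ℕ, Unmovable M Δ c ∧ a = c * Δ ^ s := by
  induction hn : factorLength M a using Nat.strong_induction_on generalizing a with
  | _ n ih =>
    by_cases h : leR M Δ a
    · obtain ⟨c, s, hc, he⟩ :=
        ih _ (hn ▸ g.factorLength_mul_inv_lt g.delta_mem hΔ h) h rfl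
      exact ⟨c, s + 1, hc, by rw [pow_succ, ← mul_assoc, ← he, inv_mul_cancel_right]⟩
    · exact ⟨a, 0, ⟨ha, h⟩, by simp⟩

theorem eq_of_unmovable_of_mul_zpow_eq {c' : G} {t : ℤ} (hc : Unmovable M Δ c)
    (hc' : Unmovable M Δ c') (h : c * Δ ^ t = c') : c = c' := by
  rcases lt_trichotomy t 0 with ht | rfl | ht
  · refine absurd ?_ hc.2
    have e : c * Δ⁻¹ = c' * Δ ^ (-t - 1) := by rw [← h]; group
    show c * Δ⁻¹ ∈ M
    exact e ▸ M.mul_mem hc'.1 (zpow_mem_of_nonneg g.delta_mem (by omega))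
  · simpa using h
  · refine absurd ?_ hc'.2
    have e : c' * Δ⁻¹ = c * Δ ^ (t - 1) := by rw [← h]; group
    show c' * Δ⁻¹ ∈ M
    exact e ▸ M.mul_mem hc.1 (zpow_mem_of_nonneg g.delta_mem (by omega))

end FactorLength

section Lattice

variable {M : Submonoid G} {Δ a b c d x y : G} (g : IsGarsideOn ⊤ M Δ)

noncomputable def meetR (a b : G) : G :=
  (g.meet a (Subgroup.mem_top a) b (Subgroup.mem_top b)).choose

noncomputable def joinR (a b : G) : G :=
  (g.join a (Subgroup.mem_top a) b (Subgroup.mem_top b)).choose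

theorem meetR_leR_left (a b : G) : leR M (g.meetR a b) a :=
  (g.meet a (Subgroup.mem_top a) b (Subgroup.mem_top b)).choose_spec.2.1

theorem meetR_leR_right (a b : G) : leR M (g.meetR a b) b :=
  (g.meet a (Subgroup.mem_top a) b (Subgroup.mem_top b)).choose_spec.2.2.1

theorem leR_meetR (ha : leR M d a) (hb : leR M d b) : leR M d (g.meetR a b) :=
  (g.meet a (Subgroup.mem_top a) b (Subgroup.mem_top b)).choose_spec.2.2.2 d
    (Subgroup.mem_top d) ha hb

theorem meetR_mem (ha : a ∈ M) (hb : b ∈ M) : g.meetR a b ∈ M :=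
  one_leR_iff.1 (g.leR_meetR (one_leR_iff.2 ha) (one_leR_iff.2 hb))

theorem leR_joinR_left (a b : G) : leR M a (g.joinR a b) :=
  (g.join a (Subgroup.mem_top a) b (Subgroup.mem_top b)).choose_spec.2.1

theorem leR_joinR_right (a b : G) : leR M b (g.joinR a b) :=
  (g.join a (Subgroup.mem_top a) b (Subgroup.mem_top b)).choose_spec.2.2.1

theorem joinR_leR (ha : leR M a d) (hb : leR M b d) : leR M (g.joinR a b) d :=
  (g.join a (Subgroup.mem_top a) b (Subgroup.mem_top b)).choose_spec.2.2.2 d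
    (Subgroup.mem_top d) ha hb

theorem joinR_mem (ha : a ∈ M) : g.joinR a b ∈ M := mem_of_leR ha (g.leR_joinR_left a b)

theorem meetR_mul_right (a b x : G) : g.meetR (a * x) (b * x) = g.meetR a b * x := by
  refine leR_antisymm g.units_trivial ?_
    (g.leR_meetR (leR_mul_right x (g.meetR_leR_left a b)) (leR_mul_right x (g.meetR_leR_right a b)))
  have h : leR M (g.meetR (a * x) (b * x) * x⁻¹) (g.meetR a b) :=
    g.leR_meetR ((leR_mul_right_iff x).1 (by simpa using g.meetR_leR_left (a * x) (b * x)))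
      ((leR_mul_right_iff x).1 (by simpa using g.meetR_leR_right (a * x) (b * x)))
  simpa using leR_mul_right x h

theorem meetR_delta_ne_one (ha : a ∈ M) (ha1 : a ≠ 1) : g.meetR a Δ ≠ 1 := by
  obtain ⟨s, hs, hs1, hsa⟩ := g.exists_simple_leR ha ha1
  intro h
  exact hs1 (eq_one_of_leR_one g.units_trivial hs.1 (h ▸ g.leR_meetR hsa hs.2))

variable (hΔ : ∀ x : G, Commute Δ x)
include hΔ

theorem leR_meetR_delta_mul (hx : x ∈ M) (hd : leR M d (y * x)) (hdΔ : leR M d Δ) :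
    leR M d (g.meetR y Δ * x) := by
  rw [← meetR_mul_right]
  exact g.leR_meetR hd (leR_trans hdΔ (by simpa [(hΔ x).eq] using leR_mul_left hx Δ))

theorem mul_inv_meetR_leR_pow {n : ℕ} (h : leR M c (Δ ^ (n + 1))) :
    leR M (c * (g.meetR c Δ)⁻¹) (Δ ^ n) := by
  have hcΔ : leR M c (c * Δ ^ n) := by
    simpa [((hΔ c).pow_left n).eq] using leR_mul_left (pow_mem g.delta_mem n) c
  have key : leR M c (g.meetR c Δ * Δ ^ n) := by
    rw [← meetR_mul_right, ← pow_succ']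
    exact g.leR_meetR hcΔ h
  rw [← leR_mul_right_iff (g.meetR c Δ)]
  simpa [((hΔ _).pow_left n).eq] using key

end Lattice

end IsGarsideOn

/-! ### Parabolic submonoids -/

section Parabolic

variable {M : Submonoid G} {Δ δ a b c d s v x : G}

theorem parM_le (M : Submonoid G) (δ : G) : parM M δ ≤ M :=
  Submonoid.closure_le.2 fun _ hx => hx.1

theorem subset_parM (M : Submonoid G) (δ : G) : DivR M δ ⊆ parM M δ :=
  Submonoid.subset_closure

theorem parM_le_parG (M : Submonoid G) (δ : G) : parM M δ ≤ (parG M δ).toSubmonoid :=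
  Submonoid.closure_le.2 Subgroup.subset_closure

theorem leR_pow_add (hδ : δ ∈ M) (m n : ℕ) : leR M (δ ^ m) (δ ^ (n + m)) := by
  rw [pow_add]
  exact leR_mul_left (pow_mem hδ n) _

namespace IsParabolic

variable (hp : IsParabolic M Δ δ)
include hp

theorem self_mem_DivR : δ ∈ DivR M δ := ⟨hp.mem, leR_refl δ⟩

theorem self_mem_parM : δ ∈ parM M δ := subset_parM M δ hp.self_mem_DivR

theorem mem_DivR_delta : δ ∈ DivR M Δ := (hp.div_eq ▸ hp.self_mem_DivR).1

theorem delta_mul_inv_mem : Δ * δ⁻¹ ∈ M := hp.mem_DivR_delta.2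

theorem mul_inv_mem_DivR (hs : s ∈ DivR M δ) : δ * s⁻¹ ∈ DivR M δ := by
  have h : δ * s⁻¹ ∈ DivL M δ := ⟨hs.2, by simpa [leL] using hs.1⟩
  rwa [← hp.balanced] at h

theorem inv_mul_mem_DivR (hs : s ∈ DivR M δ) : s⁻¹ * δ ∈ DivR M δ := by
  rw [hp.balanced] at hs
  exact ⟨hs.2, by simpa [leR] using hs.1⟩

theorem mul_inv_mem_DivR_of_leR (hd : leR M d δ) (hs : s ∈ DivR M δ) (hsd : leR M s d) :
    d * s⁻¹ ∈ DivR M δ :=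
  ⟨hsd, leR_trans (leR_mul_right s⁻¹ hd) (hp.mul_inv_mem_DivR hs).2⟩

theorem conj_mem_parM (hx : x ∈ parM M δ) : δ * x * δ⁻¹ ∈ parM M δ := by
  induction hx using Submonoid.closure_induction with
  | mem s hs =>
    simpa [mul_assoc] using subset_parM M δ (hp.mul_inv_mem_DivR (hp.mul_inv_mem_DivR hs))
  | one => simp
  | mul x y _ _ hx hy => simpa [mul_assoc] using (parM M δ).mul_mem hx hy

theorem inv_conj_mem_parM (hx : x ∈ parM M δ) : δ⁻¹ * x * δ ∈ parM M δ := by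
  induction hx using Submonoid.closure_induction with
  | mem s hs =>
    simpa [mul_assoc] using subset_parM M δ (hp.inv_mul_mem_DivR (hp.inv_mul_mem_DivR hs))
  | one => simp
  | mul x y _ _ hx hy => simpa [mul_assoc] using (parM M δ).mul_mem hx hy

theorem zpow_conj_mem_parM (j : ℤ) (hx : x ∈ parM M δ) :
    δ ^ j * x * (δ ^ j)⁻¹ ∈ parM M δ := by
  induction j using Int.induction_on with
  | zero => simpa using hx
  | succ i ih =>
    have e : δ ^ ((i : ℤ) + 1) * x * (δ ^ ((i : ℤ) + 1))⁻¹ =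
        δ * (δ ^ (i : ℤ) * x * (δ ^ (i : ℤ))⁻¹) * δ⁻¹ := by group
    exact e ▸ hp.conj_mem_parM ih
  | pred i ih =>
    have e : δ ^ (-(i : ℤ) - 1) * x * (δ ^ (-(i : ℤ) - 1))⁻¹ =
        δ⁻¹ * (δ ^ (-(i : ℤ)) * x * (δ ^ (-(i : ℤ)))⁻¹) * δ := by group
    exact e ▸ hp.inv_conj_mem_parM ih

theorem exists_pow_mul_inv_mem_parM (hx : x ∈ parM M δ) : ∃ m : ℕ, δ ^ m * x⁻¹ ∈ parM M δ := by
  induction hx using Submonoid.closure_induction with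
  | mem s hs => exact ⟨1, by simpa using subset_parM M δ (hp.mul_inv_mem_DivR hs)⟩
  | one => exact ⟨0, by simp⟩
  | mul x y _ _ hx hy =>
    obtain ⟨n, hn⟩ := hx
    obtain ⟨m, hm⟩ := hy
    have e : δ ^ (n + m) * (x * y)⁻¹ =
        δ ^ (n : ℤ) * (δ ^ m * y⁻¹) * (δ ^ (n : ℤ))⁻¹ * (δ ^ n * x⁻¹) := by group
    exact ⟨n + m, e ▸ (parM M δ).mul_mem (hp.zpow_conj_mem_parM n hm) hn⟩

theorem eq_one_of_leR_delta_mul_inv_of_leR (hM : ∀ x : G, x ∈ M → x⁻¹ ∈ M → x = 1) (hd : d ∈ M)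
    (hdθ : leR M d (Δ * δ⁻¹)) (hdδ : leR M d δ) : d = 1 := by
  have hdδΔ : d * δ ∈ DivR M δ := by
    rw [hp.div_eq]
    refine ⟨⟨M.mul_mem hd hp.mem, by simpa [leR, mul_assoc] using hdθ⟩, ?_⟩
    exact (parM M δ).mul_mem (subset_parM M δ ⟨hd, hdδ⟩) hp.self_mem_parM
  exact hM d hd (by simpa [leR] using hdδΔ.2)

variable (g : IsGarsideOn ⊤ M Δ) (hΔ : ∀ x : G, Commute Δ x)
include g

theorem leR_of_leR_sq (hdΔ : leR M d Δ) (hdδ : leR M d (δ ^ 2)) : leR M d δ := by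
  set d₁ := g.meetR d δ
  have hθδ : g.meetR (Δ * δ⁻¹) δ = 1 :=
    hp.eq_one_of_leR_delta_mul_inv_of_leR g.units_trivial (g.meetR_mem hp.delta_mul_inv_mem hp.mem)
      (g.meetR_leR_left _ _) (g.meetR_leR_right _ _)
  have hy : leR M (d * d₁⁻¹) (δ * d₁⁻¹) := by
    have h := g.leR_meetR (leR_mul_right d₁⁻¹ hdΔ) (leR_mul_right d₁⁻¹ hdδ)
    rwa [show Δ * d₁⁻¹ = Δ * δ⁻¹ * (δ * d₁⁻¹) by group,
      show δ ^ 2 * d₁⁻¹ = δ * (δ * d₁⁻¹) by rw [pow_two, mul_assoc], g.meetR_mul_right, hθδ,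
      one_mul] at h
  simpa using leR_mul_right d₁ hy

include hΔ in
theorem leR_of_leR_pow (n : ℕ) (hdΔ : leR M d Δ) (hdδ : leR M d (δ ^ n)) : leR M d δ := by
  induction n generalizing d with
  | zero => exact M.mul_mem hp.mem (by simpa [leR] using hdδ)
  | succ n ih =>
    have h : leR M d (g.meetR (δ ^ n) Δ * δ) :=
      g.leR_meetR_delta_mul hΔ hp.mem (by rwa [← pow_succ]) hdΔ
    have hmeet : leR M (g.meetR (δ ^ n) Δ) δ :=
      ih (g.meetR_leR_right _ _) (g.meetR_leR_left _ _)
    exact hp.leR_of_leR_sq g hdΔ (leR_trans h (by simpa [pow_two] using leR_mul_right δ hmeet))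

theorem mul_inv_mem_parM_of_mem_DivR (hv : v ∈ parM M δ) :
    ∀ {s : G}, s ∈ DivR M δ → leR M s v → v * s⁻¹ ∈ parM M δ := by
  induction hv using Submonoid.closure_induction_right with
  | one =>
    intro s hs hs1
    simp [eq_one_of_leR_one g.units_trivial hs.1 hs1]
  | mul_right w hw t ht ih =>
    intro s hs hst
    set j := g.joinR s t
    have hjδ : leR M j δ := g.joinR_leR hs.2 ht.2
    have hjw : leR M (j * t⁻¹) w :=
      (leR_mul_right_iff t).1 (by simpa using g.joinR_leR hst (leR_mul_left (parM_le M δ hw) t))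
    have hw' := ih (hp.mul_inv_mem_DivR_of_leR hjδ ht (g.leR_joinR_right s t)) hjw
    have e : w * t * s⁻¹ = w * (j * t⁻¹)⁻¹ * (j * s⁻¹) := by group
    exact e ▸ (parM M δ).mul_mem hw'
      (subset_parM M δ (hp.mul_inv_mem_DivR_of_leR hjδ hs (g.leR_joinR_left s t)))

include hΔ in
theorem meetR_delta_mem_DivR (hc : c ∈ M) (hv : v ∈ parM M δ) (hcv : leR M c v) :
    g.meetR c Δ ∈ DivR M δ := by
  obtain ⟨m, hm⟩ := hp.exists_pow_mul_inv_mem_parM hv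
  refine ⟨g.meetR_mem hc g.delta_mem, hp.leR_of_leR_pow g hΔ m (g.meetR_leR_right c Δ) ?_⟩
  exact leR_trans (g.meetR_leR_left c Δ) (leR_trans hcv (parM_le M δ hm))

include hΔ in
theorem mem_parM_of_leR (hc : c ∈ M) (hv : v ∈ parM M δ) (hcv : leR M c v) :
    c ∈ parM M δ ∧ v * c⁻¹ ∈ parM M δ := by
  induction hn : factorLength M c using Nat.strong_induction_on generalizing c v with
  | _ n ih =>
    by_cases hc1 : c = 1
    · subst hc1
      simpa using hv
    have hc₁ : g.meetR c Δ ∈ DivR M δ := hp.meetR_delta_mem_DivR g hΔ hc hv hcv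
    have hcc₁ : leR M (g.meetR c Δ) c := g.meetR_leR_left c Δ
    obtain ⟨h₁, h₂⟩ :=
      ih _ (hn ▸ g.factorLength_mul_inv_lt hc₁.1 (g.meetR_delta_ne_one hc hc1) hcc₁)
        hcc₁ (hp.mul_inv_mem_parM_of_mem_DivR g hv hc₁ (leR_trans hcc₁ hcv))
        (leR_mul_right _ hcv) rfl
    exact ⟨by simpa using (parM M δ).mul_mem h₁ (subset_parM M δ hc₁),
      by simpa [mul_assoc] using h₂⟩

include hΔ in
theorem joinR_mem_parM (ha : a ∈ parM M δ) (hb : b ∈ parM M δ) : g.joinR a b ∈ parM M δ := by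
  obtain ⟨m, hm⟩ := hp.exists_pow_mul_inv_mem_parM ha
  obtain ⟨n, hn⟩ := hp.exists_pow_mul_inv_mem_parM hb
  have hab : leR M (g.joinR a b) (δ ^ (n + m)) := g.joinR_leR
    (leR_trans (parM_le M δ hm) (leR_pow_add hp.mem m n))
    (leR_trans (parM_le M δ hn) (add_comm m n ▸ leR_pow_add hp.mem n m))
  exact (hp.mem_parM_of_leR g hΔ (g.joinR_mem (parM_le M δ ha))
    (pow_mem hp.self_mem_parM _) hab).1

include hΔ in
theorem pow_mul_inv_mem_parM_of_leR_pow (e : ℕ) (hx : x ∈ parM M δ) (h : leR M x (Δ ^ e)) :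
    δ ^ e * x⁻¹ ∈ parM M δ := by
  induction e generalizing x with
  | zero => simp [eq_one_of_leR_one g.units_trivial (parM_le M δ hx) (by simpa using h)]
  | succ e ih =>
    have hx₁ : g.meetR x Δ ∈ DivR M δ :=
      hp.meetR_delta_mem_DivR g hΔ (parM_le M δ hx) hx (leR_refl x)
    have hxx₁ := hp.mul_inv_mem_parM_of_mem_DivR g hx hx₁ (g.meetR_leR_left x Δ)
    have e1 : δ ^ (e + 1) * x⁻¹ = δ ^ (e : ℤ) * (δ * (g.meetR x Δ)⁻¹) * (δ ^ (e : ℤ))⁻¹ *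
        (δ ^ e * (x * (g.meetR x Δ)⁻¹)⁻¹) := by group
    exact e1 ▸ (parM M δ).mul_mem
      (hp.zpow_conj_mem_parM e (subset_parM M δ (hp.mul_inv_mem_DivR hx₁)))
      (ih hxx₁ (g.mul_inv_meetR_leR_pow hΔ h))

include hΔ in
theorem exists_upper_bound_mem_parM {F : Set G} (hF : F.Finite) (ha : a ∈ M)
    (hFa : ∀ c ∈ F, c ∈ parM M δ ∧ leR M c a) :
    ∃ b ∈ parM M δ, leR M b a ∧ ∀ c ∈ F, leR M c b := by
  induction F, hF using Set.Finite.induction_on with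
  | empty => exact ⟨1, (parM M δ).one_mem, one_leR_iff.2 ha, by simp⟩
  | @insert x F _ _ ih =>
    obtain ⟨b, hb, hba, hFb⟩ := ih fun c hc => hFa c (Set.mem_insert_of_mem x hc)
    obtain ⟨hx, hxa⟩ := hFa x (Set.mem_insert x F)
    refine ⟨g.joinR x b, hp.joinR_mem_parM g hΔ hx hb, g.joinR_leR hxa hba, ?_⟩
    rintro c (rfl | hc)
    · exact g.leR_joinR_left c b
    · exact leR_trans (hFb c hc) (g.leR_joinR_right x b)

end IsParabolic

end Parabolic

/-! ### Tails, breadth and depth -/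

section Tail

variable {M N' : Submonoid G} {a b : G}

theorem tail_mem (M N' : Submonoid G) (a : G) : tail M N' a ∈ N' := by
  unfold tail
  split_ifs with h
  exacts [h.choose_spec.1, N'.one_mem]

theorem tail_eq (hM : ∀ x : G, x ∈ M → x⁻¹ ∈ M → x = 1) (hb : b ∈ N') (hba : leR M b a)
    (hmax : ∀ c ∈ N', leR M c a → leR M c b) : tail M N' a = b := by
  have hex : ∃ b' : G, b' ∈ N' ∧
      {c : G | c ∈ N' ∧ leR M c a} = {c : G | c ∈ N' ∧ leR M c b'} :=
    ⟨b, hb, Set.ext fun c => and_congr_right fun hc => ⟨hmax c hc, fun h => leR_trans h hba⟩⟩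
  rw [tail, dif_pos hex]
  obtain ⟨hb', hset⟩ := hex.choose_spec
  have hiff : ∀ c ∈ N', leR M c a ↔ leR M c hex.choose := fun c hc => by
    simpa [hc] using Set.ext_iff.1 hset c
  exact leR_antisymm hM (hmax _ hb' ((hiff _ hb').2 (leR_refl _))) ((hiff b hb).1 hba)

theorem tail_one (hM : ∀ x : G, x ∈ M → x⁻¹ ∈ M → x = 1) : tail M N' 1 = 1 :=
  tail_eq hM N'.one_mem (leR_refl 1) fun _ _ h => h

theorem IsGarsideOn.finite_setOf_leR {car : Subgroup G} {Δ : G} (g : IsGarsideOn car M Δ)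
    (ha : a ∈ M) : {c | c ∈ M ∧ leR M c a}.Finite := by
  induction hn : factorLength M a using Nat.strong_induction_on generalizing a with
  | _ n ih =>
    have hS : {s | s ∈ DivR M Δ ∧ s ≠ 1 ∧ leR M s a}.Finite :=
      g.div_finite.subset fun s hs => hs.1
    refine ((hS.biUnion fun s hs => (ih _ (hn ▸ g.factorLength_mul_inv_lt hs.1.1 hs.2.1 hs.2.2)
      hs.2.2 rfl).image (· * s)).insert 1).subset ?_
    rintro c ⟨hc, hca⟩
    by_cases hc1 : c = 1
    · exact Or.inl hc1
    obtain ⟨s, hs, hs1, hsc⟩ := g.exists_simple_leR hc hc1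
    exact Or.inr (Set.mem_biUnion (x := s) ⟨hs, hs1, leR_trans hsc hca⟩
      ⟨c * s⁻¹, ⟨hsc, leR_mul_right s⁻¹ hca⟩, by simp⟩)

namespace IsParabolic

variable {Δ δ c : G} (hp : IsParabolic M Δ δ) (g : IsGarsideOn ⊤ M Δ) (hΔ : ∀ x : G, Commute Δ x)
include hp g hΔ

theorem exists_tail_eq (ha : a ∈ M) :
    ∃ b ∈ parM M δ, tail M (parM M δ) a = b ∧ leR M b a ∧
      ∀ c ∈ parM M δ, leR M c a → leR M c b := by
  obtain ⟨b, hb, hba, hmax⟩ := hp.exists_upper_bound_mem_parM g hΔ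
    ((g.finite_setOf_leR ha).subset fun c hc => ⟨parM_le M δ hc.1, hc.2⟩) ha fun _ hc => hc
  exact ⟨b, hb, tail_eq g.units_trivial hb hba fun c hc h => hmax c ⟨hc, h⟩, hba,
    fun c hc h => hmax c ⟨hc, h⟩⟩

theorem tail_leR (ha : a ∈ M) : leR M (tail M (parM M δ) a) a := by
  obtain ⟨b, -, rfl, hba, -⟩ := hp.exists_tail_eq g hΔ ha
  exact hba

theorem leR_tail (ha : a ∈ M) (hc : c ∈ parM M δ) (hca : leR M c a) :
    leR M c (tail M (parM M δ) a) := by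
  obtain ⟨b, -, rfl, -, hmax⟩ := hp.exists_tail_eq g hΔ ha
  exact hmax c hc hca

end IsParabolic

end Tail

section Breadth

variable {M M₁ N : Submonoid G} {a a' : G}

theorem strip_one (a : G) : strip M M₁ N 1 a = a * (tail M M₁ a)⁻¹ := by simp [strip]

theorem strip_two (a : G) :
    strip M M₁ N 2 a = a * (tail M N (a * (tail M M₁ a)⁻¹) * tail M M₁ a)⁻¹ := by
  simp [strip, mul_assoc]

theorem strip_add_two (q : ℕ) (a : G) :
    strip M M₁ N (q + 2) a = strip M M₁ N q (strip M M₁ N 2 a) := by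
  induction q with
  | zero => rfl
  | succ q ih =>
    show strip M M₁ N (q + 2) a *
      (tail M (if (q + 2) % 2 = 0 then M₁ else N) (strip M M₁ N (q + 2) a))⁻¹ = _
    rw [ih, Nat.add_mod_right]
    rfl

theorem dpt_eq_of_strip_one_eq (h : strip M M₁ N 1 a = strip M M₁ N 1 a') :
    dpt M M₁ N a = dpt M M₁ N a' := by
  have hstrip : ∀ q : ℕ, strip M M₁ N (q + 1) a = strip M M₁ N (q + 1) a' := by
    intro q
    induction q with
    | zero => exact h
    | succ q ih =>
      show strip M M₁ N (q + 1) a * _ = strip M M₁ N (q + 1) a' * _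
      rw [ih]
  unfold dpt bh
  congr 2
  ext p
  refine and_congr_right fun hp => ?_
  obtain ⟨q, rfl⟩ := Nat.exists_eq_add_of_le' hp
  rw [hstrip q]

theorem dpt_eq_zero_of_strip_one_eq_one (h : strip M M₁ N 1 a = 1) : dpt M M₁ N a = 0 :=
  Nat.div_eq_of_lt (lt_of_le_of_lt (Nat.sInf_le ⟨le_rfl, h⟩) one_lt_two)

theorem dpt_one (hM : ∀ x : G, x ∈ M → x⁻¹ ∈ M → x = 1) : dpt M M₁ N 1 = 0 :=
  dpt_eq_zero_of_strip_one_eq_one (by rw [strip_one, tail_one hM, mul_inv_cancel])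

-- Without `hterm`, `bh M M₁ N a` could be `sInf ∅ = 0`, so that `dpt M M₁ N a = 0` says nothing.
theorem mem_of_dpt_eq_zero (hterm : ∃ p, 1 ≤ p ∧ strip M M₁ N p a = 1) (h : dpt M M₁ N a = 0) :
    a ∈ M₁ := by
  have hmem : bh M M₁ N a ∈ {p | 1 ≤ p ∧ strip M M₁ N p a = 1} := Nat.sInf_mem hterm
  obtain ⟨hbh, hstrip⟩ := hmem
  have hbh1 : bh M M₁ N a = 1 := by
    unfold dpt at h
    omega
  rw [hbh1, strip_one, mul_inv_eq_one] at hstrip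
  exact hstrip ▸ tail_mem M M₁ a

end Breadth

/-! ### The setting of Conditions A and B -/

section Central

variable {Δ : G} (hΔ : ∀ x : G, Commute Δ x)
include hΔ

theorem pow_conj_central (n : ℕ) (x : G) : Δ ^ n * x * (Δ ^ n)⁻¹ = x := by
  rw [((hΔ x).pow_left n).eq, mul_inv_cancel_right]

theorem mul_inv_pow_mul_mul_inv_pow (x y : G) (m n : ℕ) :
    x * (Δ ^ m)⁻¹ * (y * (Δ ^ n)⁻¹) = x * y * (Δ ^ (m + n))⁻¹ := by
  calc x * (Δ ^ m)⁻¹ * (y * (Δ ^ n)⁻¹) = x * ((Δ ^ m)⁻¹ * y) * (Δ ^ n)⁻¹ := by group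
    _ = x * (y * (Δ ^ m)⁻¹) * (Δ ^ n)⁻¹ := by rw [((hΔ y).pow_left m).inv_left.eq]
    _ = x * y * (Δ ^ (m + n))⁻¹ := by group

theorem mul_inv_pow_mul_mul_inv_pow_eq {a b c c₁ c₂ : G} {m k n t₁ t₂ K : ℕ}
    (h₁ : a * b = c₁ * Δ ^ t₁) (h₂ : c₁ * c = c₂ * Δ ^ t₂) (hK : m + k + n = t₁ + t₂ + K) :
    a * (Δ ^ m)⁻¹ * (b * (Δ ^ k)⁻¹) * (c * (Δ ^ n)⁻¹) = c₂ * (Δ ^ K)⁻¹ := by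
  rw [mul_inv_pow_mul_mul_inv_pow hΔ, mul_inv_pow_mul_mul_inv_pow hΔ, h₁, mul_assoc c₁,
    ((hΔ c).pow_left t₁).eq, ← mul_assoc, h₂, hK]
  group

end Central

namespace Setting

variable {S : Setting G} {ζ k : ℕ} {a b c d h w x α γ : G}

theorem not_DivR_delta_subset_M₁ (S : Setting G) : ¬ DivR S.M S.Δ ⊆ S.M₁ := fun h => by
  have hle : Submonoid.closure (DivR S.M S.Δ) ≤ S.M₁ := Submonoid.closure_le.2 h
  rw [S.garside.div_gen_monoid] at hle
  exact S.M1_ne (le_antisymm (parM_le _ _) hle)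

theorem delta_ne_one (S : Setting G) : S.Δ ≠ 1 := fun hΔ =>
  S.not_DivR_delta_subset_M₁ fun _ hx =>
    (eq_one_of_leR_one S.garside.units_trivial hx.1 (hΔ ▸ hx.2)) ▸ S.M₁.one_mem

theorem theta_mem (S : Setting G) : S.theta ∈ S.M := S.par1.delta_mul_inv_mem

theorem delta1_mem_G₁ (S : Setting G) : S.δ1 ∈ S.G₁ := Subgroup.subset_closure S.par1.self_mem_DivR

theorem theta_mul_delta1 (S : Setting G) : S.theta * S.δ1 = S.Δ := inv_mul_cancel_right _ _

theorem exists_of_mem_thetaBar (hx : x ∈ thetaBar S.M₁ S.theta) :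
    ∃ e : ℕ, ∃ w ∈ S.M₁, x = S.theta ^ e * w := by
  rcases hx with ⟨e, -, w, hw, rfl⟩ | hx
  exacts [⟨e, w, hw, rfl⟩, ⟨0, x, hx, by simp⟩]

theorem theta_pow_mul_mem_thetaBar (hw : w ∈ S.M₁) (e : ℕ) :
    S.theta ^ e * w ∈ thetaBar S.M₁ S.theta := by
  rcases Nat.eq_zero_or_pos e with rfl | he
  exacts [Or.inr (by simpa using hw), Or.inl ⟨e, he, w, hw, rfl⟩]

theorem exists_mem_M₁_mul_zpow_of_mem_G₁ (hh : h ∈ S.G₁) :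
    ∃ u ∈ S.M₁, ∃ r : ℤ, h = u * S.δ1 ^ r := by
  induction hh using Subgroup.closure_induction with
  | mem s hs => exact ⟨s, subset_parM _ _ hs, 0, by simp⟩
  | one => exact ⟨1, S.M₁.one_mem, 0, by simp⟩
  | mul x y _ _ hx hy =>
    obtain ⟨u, hu, r, rfl⟩ := hx
    obtain ⟨v, hv, t, rfl⟩ := hy
    exact ⟨u * (S.δ1 ^ r * v * (S.δ1 ^ r)⁻¹), S.M₁.mul_mem hu (S.par1.zpow_conj_mem_parM r hv),
      r + t, by group⟩
  | inv x _ hx =>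
    obtain ⟨u, hu, r, rfl⟩ := hx
    obtain ⟨p, hp⟩ := S.par1.exists_pow_mul_inv_mem_parM hu
    exact ⟨S.δ1 ^ (-r - p) * (S.δ1 ^ p * u⁻¹) * (S.δ1 ^ (-r - p))⁻¹,
      S.par1.zpow_conj_mem_parM _ hp, -r - p, by group⟩

def deltaG₁ (S : Setting G) : Subgroup G := Subgroup.closure (insert S.Δ (S.G₁ : Set G))

theorem delta_mem_deltaG₁ : S.Δ ∈ S.deltaG₁ := Subgroup.subset_closure (Set.mem_insert _ _)

theorem G₁_le_deltaG₁ : S.G₁ ≤ S.deltaG₁ := fun _ hx =>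
  Subgroup.subset_closure (Set.mem_insert_of_mem _ hx)

theorem mem_deltaG₁_of_mem_thetaBar (hx : x ∈ thetaBar S.M₁ S.theta) : x ∈ S.deltaG₁ := by
  obtain ⟨e, w, hw, rfl⟩ := exists_of_mem_thetaBar hx
  have hθ : S.theta ∈ S.deltaG₁ :=
    S.deltaG₁.mul_mem delta_mem_deltaG₁ (S.deltaG₁.inv_mem (G₁_le_deltaG₁ S.delta1_mem_G₁))
  exact S.deltaG₁.mul_mem (S.deltaG₁.pow_mem hθ e) (G₁_le_deltaG₁ (parM_le_parG _ _ hw))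

theorem dpt_delta_pow_strictMono (hζ : 1 ≤ ζ) (hA : S.condA ζ) :
    StrictMono fun k : ℕ => dpt S.M S.M₁ S.Nsub (S.Δ ^ k) := by
  refine strictMono_nat_of_lt_succ fun k => ?_
  rcases k with _ | k
  · have h1 := hA 1 le_rfl
    rw [pow_one] at h1
    simp [dpt_one S.garside.units_trivial, h1]
  · rw [hA _ (by omega), hA _ (by omega)]
    nlinarith

section Top

variable (hcar : S.car = ⊤)
include hcar

theorem garside_top : IsGarsideOn ⊤ S.M S.Δ := hcar ▸ S.garside

theorem commute_delta (x : G) : Commute S.Δ x := S.delta_central x (hcar ▸ Subgroup.mem_top x)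

theorem delta_pow_eq (e : ℕ) : S.Δ ^ e = S.theta ^ e * S.δ1 ^ e := by
  have hcomm : Commute S.theta S.δ1 := by
    show S.theta * S.δ1 = S.δ1 * S.theta
    rw [theta_mul_delta1, theta, ← mul_assoc, ← (commute_delta hcar S.δ1).eq, mul_inv_cancel_right]
  rw [← theta_mul_delta1, hcomm.mul_pow]

theorem eq_one_of_leR_theta_pow {e : ℕ} (hz : x ∈ S.M₁) (h : leR S.M x (S.theta ^ e)) : x = 1 := by
  have hx : leR S.M (x * S.δ1 ^ e) (S.Δ ^ e) := by
    rw [delta_pow_eq hcar]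
    exact leR_mul_right _ h
  have := S.par1.pow_mul_inv_mem_parM_of_leR_pow (garside_top hcar) (commute_delta hcar) e
    (S.M₁.mul_mem hz (pow_mem S.par1.self_mem_parM e)) hx
  exact S.garside.units_trivial x (parM_le _ _ hz) (by simpa using parM_le _ _ this)

theorem leR_theta_pow_mul_iff {e : ℕ} (hd : d ∈ S.M₁) (hw : w ∈ S.M₁) :
    leR S.M d (S.theta ^ e * w) ↔ leR S.M d w := by
  refine ⟨fun h => ?_, fun h => leR_trans h (leR_mul_left (pow_mem S.theta_mem e) w)⟩
  set g := garside_top hcar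
  have hj := (S.par1.mem_parM_of_leR g (commute_delta hcar) (parM_le _ _ hw)
    (S.par1.joinR_mem_parM g (commute_delta hcar) hd hw) (g.leR_joinR_right d w)).2
  have hjθ : leR S.M (g.joinR d w * w⁻¹) (S.theta ^ e) :=
    (leR_mul_right_iff w).1 (by simpa using g.joinR_leR h (leR_mul_left (pow_mem S.theta_mem e) w))
  rw [← mul_inv_eq_one.1 (eq_one_of_leR_theta_pow hcar hj hjθ)]
  exact g.leR_joinR_left d w

theorem not_leR_delta (hw : w ∈ S.M₁) : ¬ leR S.M S.Δ w := fun h => by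
  set g := garside_top hcar
  have hΔ := (S.par1.mem_parM_of_leR g (commute_delta hcar) g.delta_mem hw h).1
  exact S.not_DivR_delta_subset_M₁ fun s hs =>
    (S.par1.mem_parM_of_leR g (commute_delta hcar) hs.1 hΔ hs.2).1

theorem exists_theta_pow_succ_mul_eq {e : ℕ} (hw : w ∈ S.M₁)
    (h : leR S.M S.Δ (S.theta ^ (e + 1) * w)) :
    ∃ w₁ ∈ S.M₁, S.theta ^ (e + 1) * w = S.theta ^ e * w₁ * S.Δ := by
  have hwc : S.δ1⁻¹ * w * S.δ1 ∈ S.M₁ := by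
    show _ ∈ parM S.M S.δ1
    simpa using S.par1.zpow_conj_mem_parM (-1) hw
  have key : S.theta ^ (e + 1) * w = S.theta ^ e * (S.δ1⁻¹ * w * S.δ1) * S.δ1⁻¹ * S.Δ := by
    calc S.theta ^ (e + 1) * w = S.theta ^ e * (S.Δ * (S.δ1⁻¹ * w)) := by
          rw [pow_succ, theta]; group
      _ = S.theta ^ e * (S.δ1⁻¹ * w * S.Δ) := by rw [(commute_delta hcar _).eq]
      _ = S.theta ^ e * (S.δ1⁻¹ * w * S.δ1) * S.δ1⁻¹ * S.Δ := by group
  have hδ1 : leR S.M S.δ1 (S.δ1⁻¹ * w * S.δ1) :=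
    (leR_theta_pow_mul_iff hcar S.par1.self_mem_parM hwc).1
    (by simpa [leR, key, mul_assoc] using h)
  exact ⟨_, (S.par1.mem_parM_of_leR (garside_top hcar) (commute_delta hcar) S.par1.mem hwc hδ1).2,
    by rw [key]; group⟩

theorem exists_unmovable_theta_pow_mul (e : ℕ) (hw : w ∈ S.M₁) :
    ∃ f s : ℕ, f + s = e ∧ ∃ w' ∈ S.M₁, S.theta ^ e * w = S.theta ^ f * w' * S.Δ ^ s ∧
      Unmovable S.M S.Δ (S.theta ^ f * w') := by
  induction e generalizing w with
  | zero =>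
    exact ⟨0, 0, rfl, w, hw, by simp, by simpa using ⟨parM_le _ _ hw, not_leR_delta hcar hw⟩⟩
  | succ e ih =>
    by_cases hmov : leR S.M S.Δ (S.theta ^ (e + 1) * w)
    · obtain ⟨w₁, hw₁, he⟩ := exists_theta_pow_succ_mul_eq hcar hw hmov
      obtain ⟨f, s, hfs, w', hw', he', hu⟩ := ih hw₁
      exact ⟨f, s + 1, by omega, w', hw', by rw [he, he', pow_succ, mul_assoc], hu⟩
    · exact ⟨e + 1, 0, rfl, w, hw, by simp,
        S.M.mul_mem (pow_mem S.theta_mem _) (parM_le _ _ hw), hmov⟩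

theorem exists_theta_pow_form_of_mem_G₁ (hh : h ∈ S.G₁) :
    ∃ j : ℕ, ∃ u ∈ S.M₁, h = S.theta ^ j * u * (S.Δ ^ j)⁻¹ := by
  obtain ⟨u, hu, r, rfl⟩ := exists_mem_M₁_mul_zpow_of_mem_G₁ hh
  obtain ⟨n, hn⟩ : ∃ n : ℕ, (n : ℤ) = r.natAbs + r := ⟨_, Int.toNat_of_nonneg (by omega)⟩
  refine ⟨r.natAbs, S.δ1 ^ (r.natAbs : ℤ) * u * (S.δ1 ^ (r.natAbs : ℤ))⁻¹ * S.δ1 ^ n,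
    S.M₁.mul_mem (S.par1.zpow_conj_mem_parM _ hu) (pow_mem S.par1.self_mem_parM n), ?_⟩
  calc u * S.δ1 ^ r = S.Δ ^ r.natAbs * (u * S.δ1 ^ r) * (S.Δ ^ r.natAbs)⁻¹ :=
        (pow_conj_central (commute_delta hcar) r.natAbs (u * S.δ1 ^ r)).symm
    _ = _ := by
        rw [delta_pow_eq hcar, ← zpow_natCast S.δ1 n, hn]
        group

theorem exists_unmovable_form_of_mem_G₁ (hh : h ∈ S.G₁) :
    ∃ p : ℕ, ∃ w ∈ S.M₁, Unmovable S.M S.Δ (S.theta ^ p * w) ∧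
      h = S.theta ^ p * w * (S.Δ ^ p)⁻¹ := by
  obtain ⟨j, u, hu, rfl⟩ := exists_theta_pow_form_of_mem_G₁ hcar hh
  obtain ⟨f, s, rfl, w, hw, he, hwu⟩ := exists_unmovable_theta_pow_mul hcar j hu
  exact ⟨f, w, hw, hwu, by rw [he, pow_add]; group⟩

theorem theta_pow_mul_mul_inv_mem_G₁ (hw : w ∈ S.M₁) (j : ℕ) :
    S.theta ^ j * w * (S.Δ ^ j)⁻¹ ∈ S.G₁ := by
  have e : S.theta ^ j * w * (S.Δ ^ j)⁻¹ = (S.δ1 ^ j)⁻¹ * w := by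
    calc S.theta ^ j * w * (S.Δ ^ j)⁻¹
        = S.Δ ^ j * ((S.δ1 ^ j)⁻¹ * w) * (S.Δ ^ j)⁻¹ := by rw [delta_pow_eq hcar]; group
      _ = (S.δ1 ^ j)⁻¹ * w := pow_conj_central (commute_delta hcar) j _
  rw [e]
  exact S.G₁.mul_mem (S.G₁.inv_mem (S.G₁.pow_mem S.delta1_mem_G₁ j)) (parM_le_parG _ _ hw)

theorem exists_zpow_mul_of_mem_deltaG₁ (hx : x ∈ S.deltaG₁) :
    ∃ a : ℤ, ∃ h ∈ S.G₁, x = S.Δ ^ a * h := by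
  induction hx using Subgroup.closure_induction with
  | mem x hx =>
    rcases hx with rfl | hx
    exacts [⟨1, 1, S.G₁.one_mem, by simp⟩, ⟨0, x, hx, by simp⟩]
  | one => exact ⟨0, 1, S.G₁.one_mem, by simp⟩
  | mul x y _ _ hx hy =>
    obtain ⟨a, h, hh, rfl⟩ := hx
    obtain ⟨b, h', hh', rfl⟩ := hy
    refine ⟨a + b, h * h', S.G₁.mul_mem hh hh', ?_⟩
    rw [zpow_add, mul_assoc, ← mul_assoc h, ← ((commute_delta hcar h).zpow_left b).eq]
    group
  | inv x _ hx =>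
    obtain ⟨a, h, hh, rfl⟩ := hx
    refine ⟨-a, h⁻¹, S.G₁.inv_mem hh, ?_⟩
    rw [mul_inv_rev, ← zpow_neg]
    exact ((commute_delta hcar h⁻¹).zpow_left (-a)).eq.symm

theorem mem_thetaBar_of_mem_deltaG₁ (hx : Unmovable S.M S.Δ x) (hxK : x ∈ S.deltaG₁) :
    x ∈ thetaBar S.M₁ S.theta := by
  obtain ⟨a, h, hh, rfl⟩ := exists_zpow_mul_of_mem_deltaG₁ hcar hxK
  obtain ⟨j, u, hu, rfl⟩ := exists_theta_pow_form_of_mem_G₁ hcar hh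
  obtain ⟨f, s, -, w, hw, he, hwu⟩ := exists_unmovable_theta_pow_mul hcar j hu
  have hform : S.theta ^ f * w * S.Δ ^ ((s : ℤ) - j + a) =
      S.Δ ^ a * (S.theta ^ j * u * (S.Δ ^ j)⁻¹) := by
    rw [he, ((commute_delta hcar _).zpow_left a).eq]
    group
  rw [← S.garside.eq_of_unmovable_of_mul_zpow_eq hwu hx hform]
  exact theta_pow_mul_mem_thetaBar hw f

theorem notMem_thetaBar_of_mul_eq_left {t : ℕ} (ha : a ∈ thetaBar S.M₁ S.theta)
    (hb : Unmovable S.M S.Δ b) (hbθ : b ∉ thetaBar S.M₁ S.theta) (h : a * b = c * S.Δ ^ t) :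
    c ∉ thetaBar S.M₁ S.theta := fun hc => hbθ <| mem_thetaBar_of_mem_deltaG₁ hcar hb <| by
  rw [eq_inv_mul_of_mul_eq h]
  exact S.deltaG₁.mul_mem (S.deltaG₁.inv_mem (mem_deltaG₁_of_mem_thetaBar ha))
    (S.deltaG₁.mul_mem (mem_deltaG₁_of_mem_thetaBar hc) (S.deltaG₁.pow_mem delta_mem_deltaG₁ t))

theorem notMem_thetaBar_of_mul_eq_right {t : ℕ} (hb : b ∈ thetaBar S.M₁ S.theta)
    (ha : Unmovable S.M S.Δ a) (haθ : a ∉ thetaBar S.M₁ S.theta) (h : a * b = c * S.Δ ^ t) :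
    c ∉ thetaBar S.M₁ S.theta := fun hc => haθ <| mem_thetaBar_of_mem_deltaG₁ hcar ha <| by
  rw [eq_mul_inv_of_mul_eq h]
  exact S.deltaG₁.mul_mem (S.deltaG₁.mul_mem (mem_deltaG₁_of_mem_thetaBar hc)
    (S.deltaG₁.pow_mem delta_mem_deltaG₁ t)) (S.deltaG₁.inv_mem (mem_deltaG₁_of_mem_thetaBar hb))

theorem tail_theta_pow_mul {e : ℕ} (hw : w ∈ S.M₁) : tail S.M S.M₁ (S.theta ^ e * w) = w :=
  tail_eq S.garside.units_trivial hw (leR_mul_left (pow_mem S.theta_mem e) w)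
    fun _ hc h => (leR_theta_pow_mul_iff hcar hc hw).1 h

theorem dpt_theta_pow_mul {e : ℕ} (hw : w ∈ S.M₁) :
    dpt S.M S.M₁ S.Nsub (S.theta ^ e * w) = dpt S.M S.M₁ S.Nsub (S.Δ ^ e) := by
  apply dpt_eq_of_strip_one_eq
  rw [strip_one, strip_one, tail_theta_pow_mul hcar hw, delta_pow_eq hcar,
    tail_theta_pow_mul hcar (pow_mem S.par1.self_mem_parM e)]
  simp

theorem factorLength_strip_two_lt (ha : a ∈ S.M) (ha1 : a ≠ 1) :
    strip S.M S.M₁ S.Nsub 2 a ∈ S.M ∧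
      factorLength S.M (strip S.M S.M₁ S.Nsub 2 a) < factorLength S.M a := by
  set g := garside_top hcar
  have hΔ := commute_delta hcar
  set t₁ := tail S.M S.M₁ a
  set t₂ := tail S.M S.Nsub (a * t₁⁻¹)
  have ht₁M : t₁ ∈ S.M := parM_le _ _ (tail_mem _ _ _)
  have ht₂M : t₂ ∈ S.M := parM_le _ _ (tail_mem _ _ _)
  have ha₁ : a * t₁⁻¹ ∈ S.M := S.par1.tail_leR g hΔ ha
  have ht₂ : leR S.M t₂ (a * t₁⁻¹) := S.parH.tail_leR g hΔ ha₁
  have ht : leR S.M (t₂ * t₁) a := by simpa [leR, mul_assoc] using ht₂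
  have ht1 : t₂ * t₁ ≠ 1 := by
    intro h
    have ht₂1 : t₂ = 1 :=
      S.garside.units_trivial t₂ ht₂M (by rwa [inv_eq_of_mul_eq_one_right h])
    have ht₁1 : t₁ = 1 := by simpa [ht₂1] using h
    obtain ⟨d, hd, hd1, hda⟩ := exists_mem_leR_of_closure_eq S.unionGen ha ha1
    refine hd1 (eq_one_of_leR_one S.garside.units_trivial
      (hd.elim (parM_le _ _ ·) (parM_le _ _ ·)) ?_)
    rcases hd with hd | hd
    · exact ht₂1 ▸ S.parH.leR_tail g hΔ ha₁ hd (by simpa [ht₁1] using hda)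
    · exact ht₁1 ▸ S.par1.leR_tail g hΔ ha hd hda
  rw [strip_two]
  exact ⟨ht, g.factorLength_mul_inv_lt (S.M.mul_mem ht₂M ht₁M) ht1 ht⟩

theorem exists_strip_eq_one (ha : a ∈ S.M) : ∃ p, 1 ≤ p ∧ strip S.M S.M₁ S.Nsub p a = 1 := by
  induction hn : factorLength S.M a using Nat.strong_induction_on generalizing a with
  | _ n ih =>
    by_cases ha1 : a = 1
    · subst ha1
      exact ⟨1, le_rfl, by rw [strip_one, tail_one S.garside.units_trivial, mul_inv_cancel]⟩
    obtain ⟨hmem, hlt⟩ := factorLength_strip_two_lt hcar ha ha1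
    obtain ⟨q, -, hq⟩ := ih _ (hn ▸ hlt) hmem rfl
    exact ⟨q + 2, by omega, by rw [strip_add_two, hq]⟩

theorem mem_M₁_of_dpt_eq_zero (ha : a ∈ S.M) (h : dpt S.M S.M₁ S.Nsub a = 0) : a ∈ S.M₁ :=
  mem_of_dpt_eq_zero (exists_strip_eq_one hcar ha) h

theorem dpt_theta_pow_mul_le (hA : S.condA ζ) (hw : w ∈ S.M₁) {e ε : ℕ} (hε : 0 < e → ε = 1) :
    (dpt S.M S.M₁ S.Nsub (S.theta ^ e * w) : ℤ) ≤ ζ * e + ε := by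
  rw [dpt_theta_pow_mul hcar hw]
  rcases Nat.eq_zero_or_pos e with rfl | he
  · simp [dpt_one S.garside.units_trivial]
  · rw [hA e he, hε he]
    push_cast
    linarith

theorem dpt_le_of_theta_mul (hA : S.condA ζ) (hB : S.condB ζ) {e t : ℕ} (hw : w ∈ S.M₁)
    (hwu : Unmovable S.M S.Δ (S.theta ^ e * w)) (hb : Unmovable S.M S.Δ b)
    (hbθ : b ∉ thetaBar S.M₁ S.theta) (hc : Unmovable S.M S.Δ c)
    (h : S.theta ^ e * w * b = c * S.Δ ^ t) :
    (dpt S.M S.M₁ S.Nsub c : ℤ) ≤ ζ * e + dpt S.M S.M₁ S.Nsub b - ζ * t := by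
  obtain ⟨ε, -, hdpt, hε⟩ :=
    hB _ _ _ _ hwu hb (fun h => hbθ h.2) hc (by rw [zpow_natCast]; exact h)
  have := dpt_theta_pow_mul_le hcar hA hw fun he => hε (Or.inl ⟨e, he, w, hw, rfl⟩)
  linarith

theorem dpt_le_of_mul_theta (hA : S.condA ζ) (hB : S.condB ζ) {e t : ℕ} (hw : w ∈ S.M₁)
    (hwu : Unmovable S.M S.Δ (S.theta ^ e * w)) (ha : Unmovable S.M S.Δ a)
    (haθ : a ∉ thetaBar S.M₁ S.theta) (hc : Unmovable S.M S.Δ c)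
    (h : a * (S.theta ^ e * w) = c * S.Δ ^ t) :
    (dpt S.M S.M₁ S.Nsub c : ℤ) ≤ dpt S.M S.M₁ S.Nsub a + ζ * e - ζ * t := by
  obtain ⟨ε, -, hdpt, hε⟩ :=
    hB _ _ _ _ ha hwu (fun h => haθ h.1) hc (by rw [zpow_natCast]; exact h)
  have := dpt_theta_pow_mul_le hcar hA hw fun he => hε (Or.inr (Or.inl ⟨e, he, w, hw, rfl⟩))
  linarith

theorem mul_mem_Neg_of_mem_thetaBar (hζ : 1 ≤ ζ) (hA : S.condA ζ) (hα : α ∈ S.G₁)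
    (hγ : γ ∈ S.G₁) (hdpt : dpt S.M S.M₁ S.Nsub b < dpt S.M S.M₁ S.Nsub (S.Δ ^ k))
    (hbθ : b ∈ thetaBar S.M₁ S.theta) : α * (b * (S.Δ ^ k)⁻¹) * γ ∈ S.Neg := by
  have hmono := dpt_delta_pow_strictMono hζ hA
  obtain ⟨j, b₀, hb₀, rfl⟩ := exists_of_mem_thetaBar hbθ
  rw [dpt_theta_pow_mul hcar hb₀] at hdpt
  obtain ⟨d, rfl⟩ := Nat.exists_eq_add_of_lt (hmono.lt_iff_lt.1 hdpt)
  obtain ⟨p, w, hw, hu, hpw⟩ := exists_unmovable_form_of_mem_G₁ hcar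
    (S.G₁.mul_mem (S.G₁.mul_mem hα (theta_pow_mul_mul_inv_mem_G₁ hcar hb₀ j)) hγ)
  refine ⟨S.theta ^ p * w, p + (d + 1), hu, by omega, ?_, ?_⟩
  · calc α * (S.theta ^ j * b₀ * (S.Δ ^ (j + d + 1))⁻¹) * γ
        = α * (S.theta ^ j * b₀ * (S.Δ ^ j)⁻¹) * ((S.Δ ^ (d + 1))⁻¹ * γ) := by group
      _ = α * (S.theta ^ j * b₀ * (S.Δ ^ j)⁻¹) * γ * (S.Δ ^ (d + 1))⁻¹ := by
        rw [((commute_delta hcar γ).pow_left _).inv_left.eq]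
        group
      _ = S.theta ^ p * w * (S.Δ ^ (p + (d + 1)))⁻¹ := by
        rw [hpw]
        group
  · rw [dpt_theta_pow_mul hcar hw]
    exact hmono (by omega)

theorem mul_mem_Neg_of_notMem_thetaBar (hA : S.condA ζ) (hB : S.condB ζ) (hα : α ∈ S.G₁)
    (hγ : γ ∈ S.G₁) (hb : Unmovable S.M S.Δ b) (hk : 1 ≤ k)
    (hdpt : dpt S.M S.M₁ S.Nsub b < dpt S.M S.M₁ S.Nsub (S.Δ ^ k))
    (hbθ : b ∉ thetaBar S.M₁ S.theta) : α * (b * (S.Δ ^ k)⁻¹) * γ ∈ S.Neg := by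
  obtain ⟨m, a₀, ha₀, hau, rfl⟩ := exists_unmovable_form_of_mem_G₁ hcar hα
  obtain ⟨n, c₀, hc₀, hcu, rfl⟩ := exists_unmovable_form_of_mem_G₁ hcar hγ
  obtain ⟨c₁, t₁, hc₁, h₁⟩ :=
    S.garside.exists_unmovable_mul_pow S.delta_ne_one (S.M.mul_mem hau.1 hb.1)
  obtain ⟨c₂, t₂, hc₂, h₂⟩ :=
    S.garside.exists_unmovable_mul_pow S.delta_ne_one (S.M.mul_mem hc₁.1 hcu.1)
  have hc₁θ := notMem_thetaBar_of_mul_eq_left hcar (theta_pow_mul_mem_thetaBar ha₀ m) hb hbθ h₁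
  have hc₂θ :=
    notMem_thetaBar_of_mul_eq_right hcar (theta_pow_mul_mem_thetaBar hc₀ n) hc₁ hc₁θ h₂
  have hdpt₁ := dpt_le_of_theta_mul hcar hA hB ha₀ hau hb hbθ hc₁ h₁
  have hdpt₂ := dpt_le_of_mul_theta hcar hA hB hc₀ hcu hc₁ hc₁θ hc₂ h₂
  rw [hA k hk] at hdpt
  have hbound : (dpt S.M S.M₁ S.Nsub c₂ : ℤ) ≤ ζ * ((m + k + n : ℤ) - (t₁ + t₂)) := by
    have hdptb : (dpt S.M S.M₁ S.Nsub b : ℤ) ≤ ζ * k := by omega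
    linarith
  obtain ⟨K, hK⟩ : ∃ K : ℕ, m + k + n = t₁ + t₂ + (K + 1) := by
    refine Nat.exists_eq_add_of_lt (Nat.lt_of_not_le fun hle => hc₂θ (Or.inr ?_))
    refine mem_M₁_of_dpt_eq_zero hcar hc₂.1 ?_
    have : (ζ : ℤ) * ((m + k + n : ℤ) - (t₁ + t₂)) ≤ 0 :=
      mul_nonpos_of_nonneg_of_nonpos (by positivity) (by omega)
    omega
  refine ⟨c₂, K + 1, hc₂, by omega,
    mul_inv_pow_mul_mul_inv_pow_eq (commute_delta hcar) h₁ h₂ hK, ?_⟩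
  rw [hA _ (by omega)]
  have hK' : (m + k + n : ℤ) = t₁ + t₂ + (K + 1) := by exact_mod_cast hK
  rw [hK'] at hbound
  zify
  linarith

end Top

end Setting

end GarsideOrder

open GarsideOrder in
/-- Assuming Conditions A and B with constant `ζ ≥ 1`, `G₁ P⁻¹ G₁ ⊆ P⁻¹`: for all
`α, γ ∈ G₁` and every `(H, G₁)`-negative `β`, the element `α β γ` is `(H, G₁)`-negative. -/
theorem statement6 {G : Type*} [Group G] (S : Setting G) (hcar : S.car = ⊤)
    (ζ : ℕ) (hζ : 1 ≤ ζ) (hA : S.condA ζ) (hB : S.condB ζ) :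
    ∀ α ∈ S.G₁, ∀ γ ∈ S.G₁, ∀ β ∈ S.Neg, α * β * γ ∈ S.Neg := by
  rintro α hα γ hγ _ ⟨b, k, hb, hk, rfl, hdpt⟩
  by_cases hbθ : b ∈ thetaBar S.M₁ S.theta
  · exact Setting.mul_mem_Neg_of_mem_thetaBar hcar hζ hA hα hγ hdpt hbθ
  · exact Setting.mul_mem_Neg_of_notMem_thetaBar hcar hA hB hα hγ hb hk hdpt hbθ
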